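/- arXiv:2303.07854 — 2 statements merged into one kernel-verified Lean document; each statement's English description precedes it below -/
import Mathlib

section
/- For integers 0 ≤ s* ≤ s ≤ p with S ⊇ S* interpreted combinatorially: C(p, s*) · C(p - s*, p - s) / C(p, s) ≤ s^{s - s*}. -/
/-! Counting the pairs `S* ⊆ S ⊆ [p]` with `|S*| = s*`, `|S| = s` in two ways shows that the ratio
is exactly `C(s, s*) = C(s, s - s*)`, which is at most `s ^ (s - s*)`. -/

theorem Nat.choose_mul_choose_sub_sub_eq {n k s : ℕ} (hks : k ≤ s) (hsn : s ≤ n) :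
    n.choose k * (n - k).choose (n - s) = n.choose s * s.choose k := by
  rw [Nat.choose_symm_of_eq_add (by omega : n - k = (n - s) + (s - k))]
  exact (Nat.choose_mul hks).symm

theorem choose_ratio_superset_bound
    (p s sstar : ℕ) (h1 : sstar ≤ s) (h2 : s ≤ p) :
    (Nat.choose p sstar : ℝ) * Nat.choose (p - sstar) (p - s) / Nat.choose p s ≤
      (s : ℝ) ^ (s - sstar) := by
  have hpos : (0 : ℝ) < p.choose s := by exact_mod_cast Nat.choose_pos h2
  have hratio : (p.choose sstar : ℝ) * (p - sstar).choose (p - s) / p.choose s =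
      s.choose sstar := by
    rw [div_eq_iff hpos.ne', ← Nat.cast_mul, Nat.choose_mul_choose_sub_sub_eq h1 h2,
      Nat.cast_mul, mul_comm]
  rw [hratio, ← Nat.choose_symm h1]
  exact_mod_cast Nat.choose_le_pow s (s - sstar)
end

section
/- For integers 0 ≤ t ≤ s* ≤ p and t ≤ s ≤ p, the binomial coefficients satisfy C(s*, t) · C(p - s*, s - t) · C(p, s*) / C(p, s) ≤ s^{s - t} · p^{s* - t}. -/
/-!
Both `C(s*, t) C(p - s*, s - t) C(p, s*)` and `C(s, t) C(p - s, s* - t) C(p, s)` count the ways to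
split `p` items into blocks of sizes `t`, `s* - t`, `s - t` and the rest, so the ratio equals
`C(s, t) C(p - s, s* - t)`, and each factor is bounded by `C(n, k) ≤ n ^ k`.
-/

namespace Nat

theorem choose_mul_choose_sub_comm (n a b : ℕ) :
    n.choose a * (n - a).choose b = n.choose b * (n - b).choose a := by
  have hab := choose_mul (n := n) (le_add_right a b)
  have hba := choose_mul (n := n) (le_add_left b a)
  rw [add_tsub_cancel_left] at hab
  rw [add_tsub_cancel_right] at hba
  rw [← hab, ← hba, choose_symm_add]

theorem choose_mul_choose_sub_mul_choose {p k t : ℕ} (h : t ≤ k) (m : ℕ) :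
    k.choose t * (p - k).choose m * p.choose k
      = p.choose t * ((p - t).choose (k - t) * (p - t - (k - t)).choose m) := by
  rw [Nat.sub_sub_sub_cancel_right h, ← mul_assoc, ← choose_mul h]
  ring

theorem choose_mul_choose_sub_mul_choose_comm {p s sstar t : ℕ} (hs : t ≤ s)
    (hsstar : t ≤ sstar) :
    sstar.choose t * (p - sstar).choose (s - t) * p.choose sstar
      = s.choose t * (p - s).choose (sstar - t) * p.choose s := by
  rw [choose_mul_choose_sub_mul_choose hsstar, choose_mul_choose_sub_mul_choose hs,
    choose_mul_choose_sub_comm]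

theorem choose_le_pow_sub {n k : ℕ} (h : k ≤ n) : n.choose k ≤ n ^ (n - k) := by
  rw [← choose_symm h]
  exact choose_le_pow n (n - k)

end Nat

theorem choose_ratio_general_bound_general
    (p s sstar t : ℕ) (ht1 : t ≤ s) (ht2 : t ≤ sstar) :
    (Nat.choose sstar t : ℝ) * Nat.choose (p - sstar) (s - t) * Nat.choose p sstar /
        Nat.choose p s ≤
      (s : ℝ) ^ (s - t) * (p : ℝ) ^ (sstar - t) := by
  have hkey : (Nat.choose sstar t : ℝ) * Nat.choose (p - sstar) (s - t) * Nat.choose p sstar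
      = (Nat.choose s t * Nat.choose (p - s) (sstar - t) : ℝ) * Nat.choose p s := by
    exact_mod_cast Nat.choose_mul_choose_sub_mul_choose_comm ht1 ht2
  have hst : (Nat.choose s t : ℝ) ≤ (s : ℝ) ^ (s - t) := by
    exact_mod_cast Nat.choose_le_pow_sub ht1
  have hps : (Nat.choose (p - s) (sstar - t) : ℝ) ≤ (p : ℝ) ^ (sstar - t) := by
    exact_mod_cast (Nat.choose_le_pow _ _).trans (Nat.pow_le_pow_left (Nat.sub_le p s) _)
  rw [hkey]
  calc _ ≤ (Nat.choose s t * Nat.choose (p - s) (sstar - t) : ℝ) :=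
        div_le_of_le_mul₀ (by positivity) (by positivity) le_rfl
    _ ≤ _ := mul_le_mul hst hps (by positivity) (by positivity)

theorem choose_ratio_general_bound
    (p s sstar t : ℕ) (ht1 : t ≤ s) (ht2 : t ≤ sstar) (hs : s ≤ p) (hstar : sstar ≤ p) :
    (Nat.choose sstar t : ℝ) * Nat.choose (p - sstar) (s - t) * Nat.choose p sstar /
        Nat.choose p s ≤
      (s : ℝ) ^ (s - t) * (p : ℝ) ^ (sstar - t) :=
  choose_ratio_general_bound_general p s sstar t ht1 ht2
end
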